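/- If ε = essinf ξ > 0, then for every a>0 one has V(a) ≤ u(a/ε) < +∞, the Lagrange equation E[I(λξ)ξ]=a admits a solution λ>0, and Problem (P_a) admits the unique (up to a.s. equality) optimal solution X*=I(λξ). -/

import Mathlib

open MeasureTheory Filter Set
open scoped ENNReal

noncomputable def Vval {Ω : Type*} [MeasurableSpace Ω] (P : Measure Ω)
    (ξ : Ω → ℝ) (u : ℝ → ℝ) (a : ℝ) : ℝ≥0∞ :=
  ⨆ (X : Ω → ℝ) (_ : Measurable X) (_ : ∀ᵐ ω ∂P, 0 ≤ X ω)
    (_ : ∫⁻ ω, ENNReal.ofReal (X ω * ξ ω) ∂P = ENNReal.ofReal a),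
    ∫⁻ ω, ENNReal.ofReal (u (X ω)) ∂P

/-- `X` is an optimal solution of Problem (P_a): it is feasible (measurable,
nonnegative a.s., satisfying the budget constraint `E[Xξ] = a`) and its expected
utility dominates that of every feasible solution. -/
def IsOptimal {Ω : Type*} [MeasurableSpace Ω] (P : Measure Ω)
    (ξ : Ω → ℝ) (u : ℝ → ℝ) (a : ℝ) (X : Ω → ℝ) : Prop :=
  Measurable X ∧ (∀ᵐ ω ∂P, 0 ≤ X ω) ∧
    (∫⁻ ω, ENNReal.ofReal (X ω * ξ ω) ∂P = ENNReal.ofReal a) ∧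
    ∀ Y : Ω → ℝ, Measurable Y → (∀ᵐ ω ∂P, 0 ≤ Y ω) →
      (∫⁻ ω, ENNReal.ofReal (Y ω * ξ ω) ∂P = ENNReal.ofReal a) →
      ∫⁻ ω, ENNReal.ofReal (u (Y ω)) ∂P ≤ ∫⁻ ω, ENNReal.ofReal (u (X ω)) ∂P

/-- `fLag P ξ I lam = E[I(λξ)ξ]`, the function whose equation `f(λ) = a`
determines the Lagrange multiplier. -/
noncomputable def fLag {Ω : Type*} [MeasurableSpace Ω] (P : Measure Ω)
    (ξ : Ω → ℝ) (I : ℝ → ℝ) (lam : ℝ) : ℝ≥0∞ :=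
  ∫⁻ ω, ENNReal.ofReal (I (lam * ξ ω) * ξ ω) ∂P

/-!
Write `ε = essinf ξ`, so `ξ ≥ ε` a.s. and a feasible `X` has `E[X] ≤ a/ε`; integrating the tangent
line of `u` at `a/ε` bounds `E[u(X)]` by `u(a/ε)`.

Concavity with `u(0) = 0` gives `x u'(x) ≤ u(x)`, hence `I(λξ)ξ ≤ u(I(λε))/λ` a.s. This bound makes
`f(λ) = E[I(λξ)ξ]` finite, continuous on `(0, ∞)` by dominated convergence, and at most `a` for
large `λ`. On a set `{ξ ≤ M}` of positive probability `I(λξ) ≥ I(λM)`, which is large for small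
`λ`, so `f(λ) ≥ a` there, and the intermediate value theorem solves `f(λ) = a`.

For `X* = I(λξ)`, the tangent line of `u` at `X*` has slope `λξ`, so every `Y ≥ 0` satisfies
`u(Y) + λξX* ≤ u(X*) + λξY`, strictly where `Y ≠ X*`. Taking expectations and using both budget
constraints gives optimality of `X*`; for another optimal `Y` the expectations agree, so the
inequality is an a.s. equality and `Y = X*` a.s.
-/

section Tangent

variable {S : Set ℝ} {f : ℝ → ℝ} {d x y : ℝ}

theorem ConcaveOn.le_add_mul_sub_of_hasDerivAt (hf : ConcaveOn ℝ S f) (hx : x ∈ S) (hy : y ∈ S)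
    (hd : HasDerivAt f d x) : f y ≤ f x + d * (y - x) := by
  rcases lt_trichotomy y x with hyx | rfl | hxy
  · have h := hf.le_slope_of_hasDerivAt hy hx hyx hd
    rw [slope_def_field, le_div_iff₀ (sub_pos.2 hyx)] at h
    linarith
  · simp
  · have h := hf.slope_le_of_hasDerivAt hx hy hxy hd
    rw [slope_def_field, div_le_iff₀ (sub_pos.2 hxy)] at h
    linarith

theorem StrictConcaveOn.lt_add_mul_sub_of_hasDerivAt (hf : StrictConcaveOn ℝ S f) (hx : x ∈ S)
    (hy : y ∈ S) (hyx : y ≠ x) (hd : HasDerivAt f d x) : f y < f x + d * (y - x) := by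
  rcases hyx.lt_or_gt with hyx | hxy
  · have h := hf.lt_slope_of_hasDerivAt hy hx hyx hd
    rw [slope_def_field, lt_div_iff₀ (sub_pos.2 hyx)] at h
    linarith
  · have h := hf.slope_lt_of_hasDerivAt hx hy hxy hd
    rw [slope_def_field, div_lt_iff₀ (sub_pos.2 hxy)] at h
    linarith

theorem ConcaveOn.mul_le_of_hasDerivAt_of_map_zero (hf : ConcaveOn ℝ (Ici 0) f) (hf0 : f 0 = 0)
    (hx : 0 ≤ x) (hd : HasDerivAt f d x) : x * d ≤ f x := by
  have h := hf.le_add_mul_sub_of_hasDerivAt hx self_mem_Ici hd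
  rw [hf0] at h
  linarith

theorem StrictConcaveOn.strictAntiOn_of_hasDerivAt {f' : ℝ → ℝ} (hf : StrictConcaveOn ℝ S f)
    (hd : ∀ x ∈ S, HasDerivAt f (f' x) x) : StrictAntiOn f' S := fun x hx y hy hxy =>
  (hf.lt_slope_of_hasDerivAt hx hy hxy (hd y hy)).trans
    (hf.slope_lt_of_hasDerivAt hx hy hxy (hd x hx))

end Tangent

namespace StrictAntiOn

variable {g I : ℝ → ℝ} {x y : ℝ}

theorem le_rightInverse_iff (hg : StrictAntiOn g (Ioi 0)) (hI_pos : ∀ y, 0 < y → 0 < I y)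
    (hI_right : ∀ y, 0 < y → g (I y) = y) (hx : 0 < x) (hy : 0 < y) : x ≤ I y ↔ y ≤ g x := by
  conv_rhs => rw [← hI_right y hy]
  exact (hg.le_iff_ge (hI_pos y hy) hx).symm

theorem antitoneOn_rightInverse (hg : StrictAntiOn g (Ioi 0)) (hI_pos : ∀ y, 0 < y → 0 < I y)
    (hI_right : ∀ y, 0 < y → g (I y) = y) : AntitoneOn I (Ioi 0) := fun y₁ hy₁ y₂ hy₂ h12 => by
  rw [hg.le_rightInverse_iff hI_pos hI_right (hI_pos y₂ hy₂) hy₁, hI_right y₂ hy₂]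
  exact h12

theorem continuousAt_rightInverse (hg : StrictAntiOn g (Ioi 0)) (hI_pos : ∀ y, 0 < y → 0 < I y)
    (hI_right : ∀ y, 0 < y → g (I y) = y) (hy : 0 < y) : ContinuousAt I y := by
  have lt_iff : ∀ {x z : ℝ}, 0 < x → 0 < z → (I z < x ↔ g x < z) := fun hx hz => by
    conv_rhs => rw [← hI_right _ hz]
    exact (hg.lt_iff_gt hx (hI_pos _ hz)).symm
  have gt_iff : ∀ {x z : ℝ}, 0 < x → 0 < z → (x < I z ↔ z < g x) := fun hx hz => by
    conv_rhs => rw [← hI_right _ hz]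
    exact (hg.lt_iff_gt (hI_pos _ hz) hx).symm
  refine tendsto_order.2 ⟨fun b hb => ?_, fun b hb => ?_⟩
  · rcases le_or_gt b 0 with hb0 | hb0
    · filter_upwards [lt_mem_nhds hy] with z hz using hb0.trans_lt (hI_pos z hz)
    · filter_upwards [Ioo_mem_nhds hy ((gt_iff hb0 hy).1 hb)] with z hz
      exact (gt_iff hb0 hz.1).2 hz.2
  · have hb0 : 0 < b := (hI_pos y hy).trans hb
    filter_upwards [lt_mem_nhds hy, lt_mem_nhds ((lt_iff hb0 hy).1 hb)] with z hz hbz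
    exact (lt_iff hb0 hz).2 hbz

end StrictAntiOn

section Integrals

variable {Ω : Type*} [MeasurableSpace Ω] {P : Measure Ω}

theorem lintegral_ofReal_add_mul {f g : Ω → ℝ} {c : ℝ} (hc : 0 ≤ c) (hf : Measurable f)
    (hg : Measurable g) (hf0 : ∀ᵐ ω ∂P, 0 ≤ f ω) (hg0 : ∀ᵐ ω ∂P, 0 ≤ g ω) :
    ∫⁻ ω, ENNReal.ofReal (f ω + c * g ω) ∂P
      = ∫⁻ ω, ENNReal.ofReal (f ω) ∂P + ENNReal.ofReal c * ∫⁻ ω, ENNReal.ofReal (g ω) ∂P := by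
  rw [← lintegral_const_mul _ hg.ennreal_ofReal, ← lintegral_add_left hf.ennreal_ofReal]
  refine lintegral_congr_ae ?_
  filter_upwards [hf0, hg0] with ω hf0 hg0
  rw [ENNReal.ofReal_add hf0 (mul_nonneg hc hg0), ENNReal.ofReal_mul hc]

theorem exists_pos_measure_setOf_le_ne_zero [NeZero P] (ξ : Ω → ℝ) :
    ∃ M > 0, P {ω | ξ ω ≤ M} ≠ 0 := by
  by_contra! h
  have hcover : (⋃ n : ℕ, {ω | ξ ω ≤ n + 1}) = univ :=
    iUnion_eq_univ_iff.2 fun ω => (exists_nat_ge (ξ ω)).imp fun n hn =>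
      (by linarith : ξ ω ≤ n + 1)
  have hnull := measure_iUnion_null fun n : ℕ => h (n + 1) (by positivity)
  rw [hcover] at hnull
  exact NeZero.ne P (Measure.measure_univ_eq_zero.1 hnull)

end Integrals

section UtilityMaximization

variable {Ω : Type*} [MeasurableSpace Ω] {P : Measure Ω} {ξ X : Ω → ℝ} {u u' : ℝ → ℝ}
  {ε a c : ℝ}

theorem lintegral_ofReal_le_of_budget (hε : 0 < ε) (hξε : ∀ᵐ ω ∂P, ε ≤ ξ ω)
    (hX0 : ∀ᵐ ω ∂P, 0 ≤ X ω) (hXa : ∫⁻ ω, ENNReal.ofReal (X ω * ξ ω) ∂P = ENNReal.ofReal a) :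
    ∫⁻ ω, ENNReal.ofReal (X ω) ∂P ≤ ENNReal.ofReal (a / ε) := by
  rw [ENNReal.ofReal_div_of_pos hε, ENNReal.le_div_iff_mul_le (Or.inl (by simpa using hε))
    (Or.inl ENNReal.ofReal_ne_top), mul_comm, ← lintegral_const_mul' _ _ ENNReal.ofReal_ne_top,
    ← hXa]
  refine lintegral_mono_ae ?_
  filter_upwards [hξε, hX0] with ω hω hX0
  rw [← ENNReal.ofReal_mul hε.le]
  exact ENNReal.ofReal_le_ofReal (by nlinarith)

theorem lintegral_ofReal_comp_le [IsProbabilityMeasure P] (hu_conc : ConcaveOn ℝ (Ici 0) u)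
    (hu_nonneg : ∀ x, 0 ≤ x → 0 ≤ u x) (hc : 0 < c) (hd : HasDerivAt u (u' c) c)
    (hu'c : 0 ≤ u' c) (hX0 : ∀ᵐ ω ∂P, 0 ≤ X ω)
    (hX : ∫⁻ ω, ENNReal.ofReal (X ω) ∂P ≤ ENNReal.ofReal c) :
    ∫⁻ ω, ENNReal.ofReal (u (X ω)) ∂P ≤ ENNReal.ofReal (u c) := by
  have tangent : ∫⁻ ω, ENNReal.ofReal (u (X ω)) ∂P + ENNReal.ofReal (u' c * c)
      ≤ ENNReal.ofReal (u c) + ENNReal.ofReal (u' c) * ∫⁻ ω, ENNReal.ofReal (X ω) ∂P := by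
    rw [← lintegral_const_mul' _ _ ENNReal.ofReal_ne_top]
    calc ∫⁻ ω, ENNReal.ofReal (u (X ω)) ∂P + ENNReal.ofReal (u' c * c)
        = ∫⁻ ω, ENNReal.ofReal (u (X ω)) + ENNReal.ofReal (u' c * c) ∂P := by
          rw [lintegral_add_right _ measurable_const, lintegral_const, measure_univ, mul_one]
      _ ≤ ∫⁻ ω, ENNReal.ofReal (u c) + ENNReal.ofReal (u' c) * ENNReal.ofReal (X ω) ∂P := by
          refine lintegral_mono_ae ?_
          filter_upwards [hX0] with ω hX0
          have h := hu_conc.le_add_mul_sub_of_hasDerivAt hc.le hX0 hd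
          rw [← ENNReal.ofReal_mul hu'c, ← ENNReal.ofReal_add (hu_nonneg _ hX0) (by positivity),
            ← ENNReal.ofReal_add (hu_nonneg _ hc.le) (by positivity)]
          exact ENNReal.ofReal_le_ofReal (by linarith)
      _ = ENNReal.ofReal (u c) + ∫⁻ ω, ENNReal.ofReal (u' c) * ENNReal.ofReal (X ω) ∂P := by
          rw [lintegral_add_left measurable_const, lintegral_const, measure_univ, mul_one]
  have budget : ENNReal.ofReal (u' c) * ∫⁻ ω, ENNReal.ofReal (X ω) ∂P
      ≤ ENNReal.ofReal (u' c * c) := by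
    rw [ENNReal.ofReal_mul hu'c]
    gcongr
  exact (ENNReal.add_le_add_iff_right ENNReal.ofReal_ne_top).1
    (tangent.trans (add_le_add_right budget _))

theorem lintegral_le_Vval (hX : Measurable X) (hX0 : ∀ᵐ ω ∂P, 0 ≤ X ω)
    (hXa : ∫⁻ ω, ENNReal.ofReal (X ω * ξ ω) ∂P = ENNReal.ofReal a) :
    ∫⁻ ω, ENNReal.ofReal (u (X ω)) ∂P ≤ Vval P ξ u a :=
  le_iSup_of_le X <| le_iSup_of_le hX <| le_iSup_of_le hX0 <| le_iSup_of_le hXa le_rfl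

theorem Vval_le [IsProbabilityMeasure P] (hu_conc : ConcaveOn ℝ (Ici 0) u)
    (hu_nonneg : ∀ x, 0 ≤ x → 0 ≤ u x) (hu_deriv : ∀ x, 0 < x → HasDerivAt u (u' x) x)
    (hu'_pos : ∀ x, 0 < x → 0 < u' x) (hε : 0 < ε) (hξε : ∀ᵐ ω ∂P, ε ≤ ξ ω) (ha : 0 < a) :
    Vval P ξ u a ≤ ENNReal.ofReal (u (a / ε)) := by
  have hc : 0 < a / ε := div_pos ha hε
  refine iSup_le fun X => iSup_le fun _ => iSup_le fun hX0 => iSup_le fun hXa => ?_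
  exact lintegral_ofReal_comp_le hu_conc hu_nonneg hc (hu_deriv _ hc) (hu'_pos _ hc).le hX0
    (lintegral_ofReal_le_of_budget hε hξε hX0 hXa)

end UtilityMaximization

section LagrangeMultiplier

variable {Ω : Type*} [MeasurableSpace Ω] {P : Measure Ω} {ξ : Ω → ℝ} {u u' I : ℝ → ℝ}
  {ε a lam μ : ℝ}

theorem ae_mul_le_div_of_le (hu_conc : ConcaveOn ℝ (Ici 0) u) (hu0 : u 0 = 0)
    (hu_mono : MonotoneOn u (Ici 0)) (hu_deriv : ∀ x, 0 < x → HasDerivAt u (u' x) x)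
    (hu' : StrictAntiOn u' (Ioi 0)) (hI_pos : ∀ y, 0 < y → 0 < I y)
    (hI_right : ∀ y, 0 < y → u' (I y) = y) (hε : 0 < ε) (hξε : ∀ᵐ ω ∂P, ε ≤ ξ ω)
    (hμ : 0 < μ) (hμlam : μ ≤ lam) :
    ∀ᵐ ω ∂P, I (lam * ξ ω) * ξ ω ≤ u (I (μ * ε)) / lam := by
  filter_upwards [hξε] with ω hω
  have hlam : 0 < lam := hμ.trans_le hμlam
  have hy : 0 < lam * ξ ω := mul_pos hlam (hε.trans_le hω)
  have hμε : 0 < μ * ε := mul_pos hμ hε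
  have hyI : I (lam * ξ ω) * (lam * ξ ω) ≤ u (I (lam * ξ ω)) := by
    simpa only [hI_right _ hy] using
      hu_conc.mul_le_of_hasDerivAt_of_map_zero hu0 (hI_pos _ hy).le (hu_deriv _ (hI_pos _ hy))
  have hIle : I (lam * ξ ω) ≤ I (μ * ε) :=
    hu'.antitoneOn_rightInverse hI_pos hI_right hμε hy (mul_le_mul hμlam hω hε.le hlam.le)
  calc I (lam * ξ ω) * ξ ω = I (lam * ξ ω) * (lam * ξ ω) / lam := by field_simp
    _ ≤ u (I (lam * ξ ω)) / lam := by gcongr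
    _ ≤ u (I (μ * ε)) / lam := by gcongr; exact hu_mono (hI_pos _ hy).le (hI_pos _ hμε).le hIle

theorem continuousAt_fLag [IsFiniteMeasure P] (hξ : Measurable ξ) (hI_meas : Measurable I)
    (hu_conc : ConcaveOn ℝ (Ici 0) u) (hu0 : u 0 = 0) (hu_mono : MonotoneOn u (Ici 0))
    (hu_deriv : ∀ x, 0 < x → HasDerivAt u (u' x) x) (hu' : StrictAntiOn u' (Ioi 0))
    (hI_pos : ∀ y, 0 < y → 0 < I y) (hI_right : ∀ y, 0 < y → u' (I y) = y) (hε : 0 < ε)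
    (hξε : ∀ᵐ ω ∂P, ε ≤ ξ ω) (hlam : 0 < lam) : ContinuousAt (fLag P ξ I) lam := by
  have hμ : 0 < lam / 2 := half_pos hlam
  have hu_nonneg : 0 ≤ u (I (lam / 2 * ε)) := by
    have hx := (hI_pos _ (mul_pos hμ hε)).le
    simpa only [hu0] using hu_mono self_mem_Ici hx hx
  refine tendsto_lintegral_filter_of_dominated_convergence
    (fun _ => ENNReal.ofReal (u (I (lam / 2 * ε)) / (lam / 2)))
    (Eventually.of_forall fun l => ((hI_meas.comp (measurable_const.mul hξ)).mul hξ).ennreal_ofReal)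
    ?_ (by simp [lintegral_const, ENNReal.mul_eq_top]) ?_
  · filter_upwards [lt_mem_nhds (half_lt_self hlam)] with l hl
    filter_upwards [ae_mul_le_div_of_le hu_conc hu0 hu_mono hu_deriv hu' hI_pos hI_right hε hξε
      hμ hl.le] with ω h
    exact ENNReal.ofReal_le_ofReal (h.trans (div_le_div_of_nonneg_left hu_nonneg hμ hl.le))
  · filter_upwards [hξε] with ω hω
    have hIcont := hu'.continuousAt_rightInverse hI_pos hI_right (mul_pos hlam (hε.trans_le hω))
    exact ENNReal.continuous_ofReal.continuousAt.comp
      ((hIcont.comp (f := fun l => l * ξ ω) (by fun_prop)).mul continuousAt_const)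

theorem exists_fLag_le [IsProbabilityMeasure P] (hu_conc : ConcaveOn ℝ (Ici 0) u) (hu0 : u 0 = 0)
    (hu_mono : MonotoneOn u (Ici 0)) (hu_deriv : ∀ x, 0 < x → HasDerivAt u (u' x) x)
    (hu' : StrictAntiOn u' (Ioi 0)) (hI_pos : ∀ y, 0 < y → 0 < I y)
    (hI_right : ∀ y, 0 < y → u' (I y) = y) (hε : 0 < ε) (hξε : ∀ᵐ ω ∂P, ε ≤ ξ ω) (ha : 0 < a) :
    ∃ lam > 0, fLag P ξ I lam ≤ ENNReal.ofReal a := by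
  set lam := max 1 (u (I (1 * ε)) / a)
  refine ⟨lam, one_pos.trans_le (le_max_left _ _), ?_⟩
  calc fLag P ξ I lam ≤ ∫⁻ _, ENNReal.ofReal (u (I (1 * ε)) / lam) ∂P :=
        lintegral_mono_ae <| (ae_mul_le_div_of_le hu_conc hu0 hu_mono hu_deriv hu' hI_pos hI_right
          hε hξε one_pos (le_max_left _ _)).mono fun _ h => ENNReal.ofReal_le_ofReal h
    _ ≤ ENNReal.ofReal a := by
        rw [lintegral_const, measure_univ, mul_one]
        refine ENNReal.ofReal_le_ofReal ((div_le_iff₀ (one_pos.trans_le (le_max_left _ _))).2 ?_)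
        rw [← div_le_iff₀' ha]
        exact le_max_right _ _

theorem exists_le_fLag [IsFiniteMeasure P] [NeZero P] (hξ : Measurable ξ)
    (hu'_pos : ∀ x, 0 < x → 0 < u' x) (hu' : StrictAntiOn u' (Ioi 0))
    (hI_pos : ∀ y, 0 < y → 0 < I y) (hI_right : ∀ y, 0 < y → u' (I y) = y) (hε : 0 < ε)
    (hξε : ∀ᵐ ω ∂P, ε ≤ ξ ω) (a : ℝ) : ∃ lam > 0, ENNReal.ofReal a ≤ fLag P ξ I lam := by
  obtain ⟨M, hM, hS⟩ := exists_pos_measure_setOf_le_ne_zero (P := P) ξ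
  set S := {ω | ξ ω ≤ M}
  have hp : 0 < (P S).toReal := ENNReal.toReal_pos hS (measure_ne_top P S)
  set K := max 1 (a / (ε * (P S).toReal))
  have hK : 0 < K := one_pos.trans_le (le_max_left _ _)
  set lam := u' K / M
  have hlam : 0 < lam := div_pos (hu'_pos K hK) hM
  have hlow : ∀ᵐ ω ∂P, ω ∈ S →
      ENNReal.ofReal (K * ε) ≤ ENNReal.ofReal (I (lam * ξ ω) * ξ ω) := by
    filter_upwards [hξε] with ω hω hωS
    have hy : 0 < lam * ξ ω := mul_pos hlam (hε.trans_le hω)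
    have hKI : K ≤ I (lam * ξ ω) := by
      refine (hu'.le_rightInverse_iff hI_pos hI_right hK hy).2 ?_
      calc lam * ξ ω ≤ lam * M := mul_le_mul_of_nonneg_left hωS hlam.le
        _ = u' K := div_mul_cancel₀ _ hM.ne'
    exact ENNReal.ofReal_le_ofReal (mul_le_mul hKI hω hε.le (hI_pos _ hy).le)
  refine ⟨lam, hlam, ?_⟩
  calc ENNReal.ofReal a ≤ ENNReal.ofReal (K * ε) * P S := by
        rw [← ENNReal.ofReal_toReal (measure_ne_top P S), ← ENNReal.ofReal_mul (by positivity),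
          mul_assoc]
        exact ENNReal.ofReal_le_ofReal ((div_le_iff₀ (by positivity)).1 (le_max_right _ _))
    _ = ∫⁻ _ in S, ENNReal.ofReal (K * ε) ∂P := (setLIntegral_const _ _).symm
    _ ≤ ∫⁻ ω in S, ENNReal.ofReal (I (lam * ξ ω) * ξ ω) ∂P :=
        setLIntegral_mono_ae' (hξ measurableSet_Iic) hlow
    _ ≤ fLag P ξ I lam := setLIntegral_le_lintegral _ _

end LagrangeMultiplier

section Optimality

variable {Ω : Type*} [MeasurableSpace Ω] {P : Measure Ω} {ξ Y Z : Ω → ℝ} {u u' I : ℝ → ℝ}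
  {ε a lam : ℝ}

theorem exists_fLag_eq [IsProbabilityMeasure P] (hξ : Measurable ξ) (hI_meas : Measurable I)
    (hu_conc : ConcaveOn ℝ (Ici 0) u) (hu0 : u 0 = 0) (hu_mono : MonotoneOn u (Ici 0))
    (hu_deriv : ∀ x, 0 < x → HasDerivAt u (u' x) x) (hu'_pos : ∀ x, 0 < x → 0 < u' x)
    (hu' : StrictAntiOn u' (Ioi 0)) (hI_pos : ∀ y, 0 < y → 0 < I y)
    (hI_right : ∀ y, 0 < y → u' (I y) = y) (hε : 0 < ε) (hξε : ∀ᵐ ω ∂P, ε ≤ ξ ω) (ha : 0 < a) :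
    ∃ lam > 0, fLag P ξ I lam = ENNReal.ofReal a := by
  obtain ⟨lam₁, hlam₁, hle₁⟩ := exists_le_fLag hξ hu'_pos hu' hI_pos hI_right hε hξε a
  obtain ⟨lam₂, hlam₂, hle₂⟩ :=
    exists_fLag_le hu_conc hu0 hu_mono hu_deriv hu' hI_pos hI_right hε hξε ha
  have hpos : uIcc lam₁ lam₂ ⊆ Ioi 0 := fun l hl => (lt_min hlam₁ hlam₂).trans_le hl.1
  have hcont : ContinuousOn (fLag P ξ I) (uIcc lam₁ lam₂) := fun l hl =>
    (continuousAt_fLag hξ hI_meas hu_conc hu0 hu_mono hu_deriv hu' hI_pos hI_right hε hξε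
      (hpos hl)).continuousWithinAt
  obtain ⟨lam, hlam, hfa⟩ := intermediate_value_uIcc hcont (mem_uIcc.2 (Or.inr ⟨hle₂, hle₁⟩))
  exact ⟨lam, hpos hlam, hfa⟩

theorem ae_lagrangian_le (hu_conc : ConcaveOn ℝ (Ici 0) u)
    (hu_deriv : ∀ x, 0 < x → HasDerivAt u (u' x) x) (hI_pos : ∀ y, 0 < y → 0 < I y)
    (hI_right : ∀ y, 0 < y → u' (I y) = y) (hξpos : ∀ᵐ ω ∂P, 0 < ξ ω) (hlam : 0 < lam)
    (hY0 : ∀ᵐ ω ∂P, 0 ≤ Y ω) :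
    ∀ᵐ ω ∂P, u (Y ω) + lam * (I (lam * ξ ω) * ξ ω) ≤ u (I (lam * ξ ω)) + lam * (Y ω * ξ ω) := by
  filter_upwards [hξpos, hY0] with ω hω hY0
  have hy : 0 < lam * ξ ω := mul_pos hlam hω
  have h := hu_conc.le_add_mul_sub_of_hasDerivAt (hI_pos _ hy).le hY0 (hu_deriv _ (hI_pos _ hy))
  rw [hI_right _ hy] at h
  linarith

theorem lintegral_lagrangian (hξ : Measurable ξ) (hξpos : ∀ᵐ ω ∂P, 0 < ξ ω) (hu_meas : Measurable u)
    (hu_nonneg : ∀ x, 0 ≤ x → 0 ≤ u x) (hlam : 0 < lam) (hY : Measurable Y) (hZ : Measurable Z)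
    (hY0 : ∀ᵐ ω ∂P, 0 ≤ Y ω) (hZ0 : ∀ᵐ ω ∂P, 0 ≤ Z ω) :
    ∫⁻ ω, ENNReal.ofReal (u (Y ω) + lam * (Z ω * ξ ω)) ∂P
      = ∫⁻ ω, ENNReal.ofReal (u (Y ω)) ∂P
        + ENNReal.ofReal lam * ∫⁻ ω, ENNReal.ofReal (Z ω * ξ ω) ∂P :=
  lintegral_ofReal_add_mul hlam.le (hu_meas.comp hY) (hZ.mul hξ)
    (hY0.mono fun _ h => hu_nonneg _ h)
    (by filter_upwards [hZ0, hξpos] with ω hZ hξ using mul_nonneg hZ hξ.le)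

theorem isOptimal_of_fLag_eq (hξ : Measurable ξ) (hξpos : ∀ᵐ ω ∂P, 0 < ξ ω)
    (hu_meas : Measurable u) (hu_nonneg : ∀ x, 0 ≤ x → 0 ≤ u x) (hu_conc : ConcaveOn ℝ (Ici 0) u)
    (hu_deriv : ∀ x, 0 < x → HasDerivAt u (u' x) x) (hI_meas : Measurable I)
    (hI_pos : ∀ y, 0 < y → 0 < I y) (hI_right : ∀ y, 0 < y → u' (I y) = y) (hlam : 0 < lam)
    (hfa : fLag P ξ I lam = ENNReal.ofReal a) :
    IsOptimal P ξ u a fun ω => I (lam * ξ ω) := by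
  have hX : Measurable fun ω => I (lam * ξ ω) := hI_meas.comp (measurable_const.mul hξ)
  have hX0 : ∀ᵐ ω ∂P, 0 ≤ I (lam * ξ ω) :=
    hξpos.mono fun ω h => (hI_pos _ (mul_pos hlam h)).le
  have hXa : ∫⁻ ω, ENNReal.ofReal (I (lam * ξ ω) * ξ ω) ∂P = ENNReal.ofReal a := hfa
  refine ⟨hX, hX0, hXa, fun Y hY hY0 hYa => ?_⟩
  have key := lintegral_mono_ae <| (ae_lagrangian_le hu_conc hu_deriv hI_pos hI_right hξpos hlam
    hY0).mono fun _ h => ENNReal.ofReal_le_ofReal h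
  rw [lintegral_lagrangian hξ hξpos hu_meas hu_nonneg hlam hY hX hY0 hX0,
    lintegral_lagrangian hξ hξpos hu_meas hu_nonneg hlam hX hY hX0 hY0, hYa, hXa] at key
  exact (ENNReal.add_le_add_iff_right (by finiteness)).1 key

theorem ae_eq_of_isOptimal (hξ : Measurable ξ) (hξpos : ∀ᵐ ω ∂P, 0 < ξ ω)
    (hu_meas : Measurable u) (hu_nonneg : ∀ x, 0 ≤ x → 0 ≤ u x)
    (hu_conc : StrictConcaveOn ℝ (Ici 0) u) (hu_deriv : ∀ x, 0 < x → HasDerivAt u (u' x) x)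
    (hI_meas : Measurable I) (hI_pos : ∀ y, 0 < y → 0 < I y)
    (hI_right : ∀ y, 0 < y → u' (I y) = y) (hlam : 0 < lam)
    (hfa : fLag P ξ I lam = ENNReal.ofReal a)
    (hfin : ∫⁻ ω, ENNReal.ofReal (u (I (lam * ξ ω))) ∂P ≠ ⊤) (hY : IsOptimal P ξ u a Y) :
    Y =ᵐ[P] fun ω => I (lam * ξ ω) := by
  have hX := isOptimal_of_fLag_eq hξ hξpos hu_meas hu_nonneg hu_conc.concaveOn hu_deriv hI_meas
    hI_pos hI_right hlam hfa
  have hXa : ∫⁻ ω, ENNReal.ofReal (I (lam * ξ ω) * ξ ω) ∂P = ENNReal.ofReal a := hfa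
  obtain ⟨hYm, hY0, hYa, hYopt⟩ := hY
  obtain ⟨hXm, hX0, -, hXopt⟩ := hX
  have hEq : ∫⁻ ω, ENNReal.ofReal (u (Y ω)) ∂P = ∫⁻ ω, ENNReal.ofReal (u (I (lam * ξ ω))) ∂P :=
    le_antisymm (hXopt Y hYm hY0 hYa) (hYopt _ hXm hX0 hXa)
  have hsplitY := lintegral_lagrangian hξ hξpos hu_meas hu_nonneg hlam hYm hXm hY0 hX0
  have hsplitX := lintegral_lagrangian hξ hξpos hu_meas hu_nonneg hlam hXm hYm hX0 hY0
  have hae := ae_eq_of_ae_le_of_lintegral_le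
    ((ae_lagrangian_le hu_conc.concaveOn hu_deriv hI_pos hI_right hξpos hlam hY0).mono
      fun _ h => ENNReal.ofReal_le_ofReal h)
    (by rw [hsplitY, hEq, hXa]; finiteness)
    ((hu_meas.comp hXm).add (measurable_const.mul (hYm.mul hξ))).ennreal_ofReal.aemeasurable
    (by rw [hsplitY, hsplitX, hEq, hXa, hYa])
  filter_upwards [hae, hξpos, hY0] with ω heq hω hY0
  have hy : 0 < lam * ξ ω := mul_pos hlam hω
  have hx : 0 < I (lam * ξ ω) := hI_pos _ hy
  rw [ENNReal.ofReal_eq_ofReal_iff (by positivity [hu_nonneg _ hY0])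
    (by positivity [hu_nonneg _ hx.le])] at heq
  by_contra hne
  have h := hu_conc.lt_add_mul_sub_of_hasDerivAt hx.le hY0 hne (hu_deriv _ hx)
  rw [hI_right _ hy] at h
  linarith

end Optimality

theorem essinf_pos_solvable_general
    {Ω : Type*} [MeasurableSpace Ω] (P : Measure Ω) [IsProbabilityMeasure P]
    (ξ : Ω → ℝ) (hξmeas : Measurable ξ) (hξpos : ∀ᵐ ω ∂P, 0 < ξ ω)
    (u u' : ℝ → ℝ) (hu_meas : Measurable u)
    (hu0 : u 0 = 0) (hu_nonneg : ∀ x : ℝ, 0 ≤ x → 0 ≤ u x)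
    (hu_mono : StrictMonoOn u (Set.Ici (0:ℝ)))
    (hu_conc : StrictConcaveOn ℝ (Set.Ici (0:ℝ)) u)
    (hu_deriv : ∀ x : ℝ, 0 < x → HasDerivAt u (u' x) x)
    (hu'_pos : ∀ x : ℝ, 0 < x → 0 < u' x)
    (I : ℝ → ℝ) (hI_meas : Measurable I) (hI_pos : ∀ y : ℝ, 0 < y → 0 < I y)
    (hI_right : ∀ y : ℝ, 0 < y → u' (I y) = y)
    (heps : 0 < essInf ξ P)
    :
    ∀ a : ℝ, 0 < a →
      Vval P ξ u a ≤ ENNReal.ofReal (u (a / essInf ξ P)) ∧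
      Vval P ξ u a < ⊤ ∧
      ∃ lam : ℝ, 0 < lam ∧ fLag P ξ I lam = ENNReal.ofReal a ∧
        IsOptimal P ξ u a (fun ω => I (lam * ξ ω)) ∧
        ∀ Y : Ω → ℝ, IsOptimal P ξ u a Y → Y =ᵐ[P] fun ω => I (lam * ξ ω) := by
  intro a ha
  have hξε : ∀ᵐ ω ∂P, essInf ξ P ≤ ξ ω :=
    ae_essInf_le ⟨0, eventually_map.2 (hξpos.mono fun _ h => h.le)⟩
  have hu' : StrictAntiOn u' (Ioi 0) :=
    (hu_conc.subset Ioi_subset_Ici_self (convex_Ioi 0)).strictAntiOn_of_hasDerivAt hu_deriv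
  have hV := Vval_le hu_conc.concaveOn hu_nonneg hu_deriv hu'_pos heps hξε ha
  obtain ⟨lam, hlam, hfa⟩ := exists_fLag_eq hξmeas hI_meas hu_conc.concaveOn hu0
    hu_mono.monotoneOn hu_deriv hu'_pos hu' hI_pos hI_right heps hξε ha
  have hopt := isOptimal_of_fLag_eq hξmeas hξpos hu_meas hu_nonneg hu_conc.concaveOn hu_deriv
    hI_meas hI_pos hI_right hlam hfa
  have hfin : ∫⁻ ω, ENNReal.ofReal (u (I (lam * ξ ω))) ∂P ≠ ⊤ :=
    ((lintegral_le_Vval hopt.1 hopt.2.1 hopt.2.2.1).trans_lt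
      (hV.trans_lt ENNReal.ofReal_lt_top)).ne
  exact ⟨hV, hV.trans_lt ENNReal.ofReal_lt_top, lam, hlam, hfa, hopt, fun Y hY =>
    ae_eq_of_isOptimal hξmeas hξpos hu_meas hu_nonneg hu_conc hu_deriv hI_meas hI_pos hI_right
      hlam hfa hfin hY⟩

theorem essinf_pos_solvable
    {Ω : Type*} [MeasurableSpace Ω] (P : Measure Ω) [IsProbabilityMeasure P]
    (ξ : Ω → ℝ) (hξmeas : Measurable ξ) (hξpos : ∀ᵐ ω ∂P, 0 < ξ ω)
    (u u' u'' : ℝ → ℝ) (hu_meas : Measurable u)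
    (hu0 : u 0 = 0) (hu_nonneg : ∀ x : ℝ, 0 ≤ x → 0 ≤ u x)
    (hu_mono : StrictMonoOn u (Set.Ici (0:ℝ)))
    (hu_conc : StrictConcaveOn ℝ (Set.Ici (0:ℝ)) u)
    (hu_deriv : ∀ x : ℝ, 0 < x → HasDerivAt u (u' x) x)
    (hu_deriv2 : ∀ x : ℝ, 0 < x → HasDerivAt u' (u'' x) x)
    (hu'_pos : ∀ x : ℝ, 0 < x → 0 < u' x)
    (hu'_zero : Tendsto u' (nhdsWithin 0 (Set.Ioi 0)) atTop)
    (hu'_top : Tendsto u' atTop (nhds 0))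
    (I : ℝ → ℝ) (hI_meas : Measurable I) (hI_pos : ∀ y : ℝ, 0 < y → 0 < I y)
    (hI_left : ∀ x : ℝ, 0 < x → I (u' x) = x)
    (hI_right : ∀ y : ℝ, 0 < y → u' (I y) = y)
    (heps : 0 < essInf ξ P)
    :
    ∀ a : ℝ, 0 < a →
      Vval P ξ u a ≤ ENNReal.ofReal (u (a / essInf ξ P)) ∧
      Vval P ξ u a < ⊤ ∧
      ∃ lam : ℝ, 0 < lam ∧ fLag P ξ I lam = ENNReal.ofReal a ∧
        IsOptimal P ξ u a (fun ω => I (lam * ξ ω)) ∧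
        ∀ Y : Ω → ℝ, IsOptimal P ξ u a Y → Y =ᵐ[P] fun ω => I (lam * ξ ω) :=
  essinf_pos_solvable_general P ξ hξmeas hξpos u u' hu_meas hu0 hu_nonneg hu_mono hu_conc hu_deriv
    hu'_pos I hI_meas hI_pos hI_right heps
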